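/- arXiv:2602.14241 — 3 statements merged into one kernel-verified Lean document; each statement's English description precedes it below -/
import Mathlib

section
/- Let Δ ≥ 4 be an integer and define F(i,j) = (4Δ−6)(1/i + 1/j) + Δ² − 6Δ + 3 + 6/Δ − (i−j)². Then for every integer i with 3 ≤ i ≤ ⌊(Δ+3)/2⌋, one has the strict inequality (Δ−1)·F(i,Δ) > F(Δ,Δ), where F(Δ,Δ) = 2(4Δ−6)/Δ + Δ² − 6Δ + 3 + 6/Δ. -/
/-!
Multiplying the difference `(Δ - 1) F(i, Δ) - F(Δ, Δ)` by `iΔ > 0` clears all denominators.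
In the coordinates `b = i - 3 ≥ 0` and `c = Δ + 3 - 2i ≥ 0` of the admissible region, the
resulting numerator is a polynomial in `b` and `c` with nonnegative coefficients and linear part
`24b + 18c`, so it is positive as soon as `(b, c) ≠ (0, 0)`, which `Δ ≥ 4` guarantees.
-/

/-- The dual slack function. -/
noncomputable def F (Δ i j : ℕ) : ℝ :=
  (4 * (Δ : ℝ) - 6) * (1 / (i : ℝ) + 1 / (j : ℝ))
    + (Δ : ℝ) ^ 2 - 6 * (Δ : ℝ) + 3 + 6 / (Δ : ℝ) - ((i : ℝ) - (j : ℝ)) ^ 2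

theorem F_self (Δ : ℕ) :
    F Δ Δ Δ = 2 * (4 * (Δ : ℝ) - 6) / Δ + (Δ : ℝ) ^ 2 - 6 * Δ + 3 + 6 / Δ := by
  unfold F
  ring

def slackGapNumerator (b c : ℝ) : ℝ :=
  24 * b + 18 * c + 11 * c ^ 2 + c ^ 3 + 68 * b * c + 31 * b * c ^ 2
    + 5 * b * c ^ 3 + 74 * b ^ 2 + 109 * b ^ 2 * c + 37 * b ^ 2 * c ^ 2
    + 2 * b ^ 2 * c ^ 3 + 96 * b ^ 3 + 83 * b ^ 3 * c + 11 * b ^ 3 * c ^ 2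
    + 58 * b ^ 4 + 20 * b ^ 4 * c + 12 * b ^ 5

theorem slackGapNumerator_pos {b c : ℝ} (hb : 0 ≤ b) (hc : 0 ≤ c) (hbc : 0 < b + c) :
    0 < slackGapNumerator b c := by
  -- `positivity` picks up `hlin` for the innermost summand `24 * b + 18 * c`
  have hlin : 0 < 24 * b + 18 * c := by linarith
  unfold slackGapNumerator
  positivity

theorem mul_sub_F_self_eq {Δ i : ℕ} (hΔ : Δ ≠ 0) (hi : i ≠ 0) :
    ((i : ℝ) * Δ) * ((Δ - 1) * F Δ i Δ - F Δ Δ Δ)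
      = slackGapNumerator ((i : ℝ) - 3) ((Δ : ℝ) + 3 - 2 * i) := by
  unfold F slackGapNumerator
  field_simp
  ring

/-- For `3 ≤ i ≤ ⌊(Δ+3)/2⌋` one has `(Δ−1)·F(i,Δ) > F(Δ,Δ)`,
where `F(Δ,Δ) = 2(4Δ−6)/Δ + Δ² − 6Δ + 3 + 6/Δ`. -/
theorem Delta_sub_one_mul_F_gt (Δ : ℕ) (hΔ : 4 ≤ Δ) (i : ℕ)
    (hi3 : 3 ≤ i) (hit : i ≤ (Δ + 3) / 2) :
    ((Δ : ℝ) - 1) * F Δ i Δ > F Δ Δ Δ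
      ∧ F Δ Δ Δ = 2 * (4 * (Δ : ℝ) - 6) / (Δ : ℝ)
          + (Δ : ℝ) ^ 2 - 6 * (Δ : ℝ) + 3 + 6 / (Δ : ℝ) := by
  refine ⟨?_, F_self Δ⟩
  have hΔ' : (4 : ℝ) ≤ Δ := by exact_mod_cast hΔ
  have hi' : (3 : ℝ) ≤ i := by exact_mod_cast hi3
  have hiΔ : 2 * (i : ℝ) ≤ Δ + 3 := by exact_mod_cast (by omega : 2 * i ≤ Δ + 3)
  have hnum : 0 < ((i : ℝ) * Δ) * ((Δ - 1) * F Δ i Δ - F Δ Δ Δ) := by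
    rw [mul_sub_F_self_eq (by omega) (by omega)]
    exact slackGapNumerator_pos (by linarith) (by linarith) (by linarith)
  have hiΔ_pos : (0 : ℝ) < i * Δ := by positivity
  exact sub_pos.mp (pos_of_mul_pos_right hnum hiΔ_pos.le)
end

section
/- Let Δ ≥ 4 be an integer, let t = ⌊(Δ+3)/2⌋, and define F(i,j) = (4Δ−6)(1/i + 1/j) + Δ² − 6Δ + 3 + 6/Δ − (i−j)². Then for all integers 1 ≤ p ≤ q ≤ t one has F(p,q) ≥ F(3,Δ). -/
noncomputable def slackGap (D P Q : ℝ) : ℝ :=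
  (4 * D - 6) * (1 / P + 1 / Q - 1 / 3 - 1 / D) + (D - 3) ^ 2 - (Q - P) ^ 2

theorem F_sub_F_three (Δ p q : ℕ) : F Δ p q - F Δ 3 Δ = slackGap Δ p q := by
  simp only [F, slackGap, Nat.cast_ofNat]
  ring

section

variable {D Q : ℝ} (hD : 4 ≤ D) (hQ : 2 * Q ≤ D + 3)

include hQ in
theorem two_div_le_one_div_of_two_mul_le (hQ₀ : 0 < Q) : 2 / (D + 3) ≤ 1 / Q := by
  rw [div_le_div_iff₀ (by linarith) hQ₀]
  linarith

include hD hQ in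
theorem one_div_le_one_div_of_two_mul_le (hQ₀ : 0 < Q) : 1 / D ≤ 1 / Q :=
  one_div_le_one_div_of_le hQ₀ (by linarith)

include hD hQ

theorem slackGap_one_nonneg (hQ₁ : 1 ≤ Q) : 0 ≤ slackGap D 1 Q := by
  have hDQ := one_div_le_one_div_of_two_mul_le hD hQ (by linarith)
  have hgap : (Q - 1) ^ 2 ≤ ((D + 1) / 2) ^ 2 := by nlinarith
  unfold slackGap
  nlinarith [mul_le_mul_of_nonneg_left hDQ (by linarith : (0 : ℝ) ≤ 4 * D - 6)]

theorem slackGap_two_nonneg (hQ₂ : 2 ≤ Q) : 0 ≤ slackGap D 2 Q := by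
  have hDQ := one_div_le_one_div_of_two_mul_le hD hQ (by linarith)
  have hgap : (Q - 2) ^ 2 ≤ ((D - 1) / 2) ^ 2 := by nlinarith
  unfold slackGap
  nlinarith [mul_le_mul_of_nonneg_left hDQ (by linarith : (0 : ℝ) ≤ 4 * D - 6)]

theorem slackGap_nonneg_of_three_le {P : ℝ} (hP : 3 ≤ P) (hPQ : P ≤ Q) :
    0 ≤ slackGap D P Q := by
  have hharm : 4 / (D + 3) ≤ 1 / P + 1 / Q :=
    calc 4 / (D + 3) = 2 / (D + 3) + 2 / (D + 3) := by ring
      _ ≤ 1 / P + 1 / Q := add_le_add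
        (two_div_le_one_div_of_two_mul_le (by linarith) (by linarith))
        (two_div_le_one_div_of_two_mul_le hQ (by linarith))
  have hdefect : 4 / (D + 3) - 1 / 3 - 1 / D = -(D - 3) ^ 2 / (3 * D * (D + 3)) := by
    field_simp
    ring
  have hsmall : (4 * D - 6) / (3 * D * (D + 3)) ≤ 3 / 4 := by
    rw [div_le_div_iff₀ (by positivity) (by norm_num)]
    nlinarith
  have hgap : (Q - P) ^ 2 ≤ ((D - 3) / 2) ^ 2 := by nlinarith
  calc (0 : ℝ) ≤ (D - 3) ^ 2 * (3 / 4 - (4 * D - 6) / (3 * D * (D + 3))) :=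
        mul_nonneg (sq_nonneg _) (by linarith)
    _ = (4 * D - 6) * (4 / (D + 3) - 1 / 3 - 1 / D) + (D - 3) ^ 2 - ((D - 3) / 2) ^ 2 := by
        rw [hdefect]; ring
    _ ≤ slackGap D P Q := by
        unfold slackGap
        nlinarith [mul_le_mul_of_nonneg_left hharm (by linarith : (0 : ℝ) ≤ 4 * D - 6)]

end

/-- For all `1 ≤ p ≤ q ≤ t`, where `t = ⌊(Δ+3)/2⌋`, one has `F(p,q) ≥ F(3,Δ)`. -/
theorem F_low_pairs_ge (Δ : ℕ) (hΔ : 4 ≤ Δ) (p q : ℕ)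
    (hp : 1 ≤ p) (hpq : p ≤ q) (hq : q ≤ (Δ + 3) / 2) :
    F Δ 3 Δ ≤ F Δ p q := by
  have hD : (4 : ℝ) ≤ Δ := by exact_mod_cast hΔ
  have hQ : 2 * (q : ℝ) ≤ Δ + 3 := by exact_mod_cast (by omega : 2 * q ≤ Δ + 3)
  rw [← sub_nonneg, F_sub_F_three]
  obtain rfl | rfl | hp₃ : p = 1 ∨ p = 2 ∨ 3 ≤ p := by omega
  · exact_mod_cast slackGap_one_nonneg hD hQ (by exact_mod_cast hpq)
  · exact_mod_cast slackGap_two_nonneg hD hQ (by exact_mod_cast hpq)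
  · exact slackGap_nonneg_of_three_le hD hQ (by exact_mod_cast hp₃) (by exact_mod_cast hpq)
end

section
/- Let Δ ≥ 4 be an integer and let T be a tree on n vertices with maximum degree exactly Δ, where Δ divides n. If the penalty P(T) = Σ_{uv ∈ E(T)} F(d(u), d(v)) equals F(Δ,Δ), then: exactly one edge of T joins two vertices of degree Δ; all other edges of T join a vertex of degree 1 to a vertex of degree Δ or a vertex of degree 2 to a vertex of degree Δ; and the numbers of vertices of each degree are n_Δ = n/Δ, n_2 = n/Δ − 2, n_1 = (Δ−2)·n/Δ + 2, with n_1 edges of type (1,Δ) and 2·n_2 edges of type (2,Δ). -/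
open Finset

lemma F_comm (Δ i j : ℕ) : F Δ i j = F Δ j i := by simp only [F]; ring

lemma F_delta (Δ i : ℕ) (hi : 1 ≤ i) (hΔ : 1 ≤ Δ) :
    F Δ i Δ = ((i:ℝ)-1)*((i:ℝ)-2)*(2*(Δ:ℝ)-3-(i:ℝ))/(i:ℝ) := by
  have hi0 : (i:ℝ) ≠ 0 := Nat.cast_ne_zero.2 (by omega)
  have hΔ0 : (Δ:ℝ) ≠ 0 := Nat.cast_ne_zero.2 (by omega)
  simp only [F]
  field_simp
  ring

lemma intD (i j Δ : ℤ) (h1 : 1 ≤ i) (hij : i ≤ j) (hj : j ≤ Δ - 1) (hΔ : 4 ≤ Δ) :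
    i*j*(j-i)^2 < (4*Δ-6)*(i+j) + i*j*(Δ^2-7*Δ+8) := by
  have hi0 : 0 < i := h1
  have hj0 : 0 < j := lt_of_lt_of_le hi0 hij
  rcases lt_or_ge i 3 with h3 | h3
  · interval_cases i
    · nlinarith [mul_nonneg (sub_nonneg.2 h1) (sub_nonneg.2 hj), sq_nonneg (j-1),
        sq_nonneg (Δ-1-j), mul_nonneg (sub_nonneg.2 hij) (sub_nonneg.2 hj)]
    · nlinarith [mul_nonneg (sub_nonneg.2 hij) (sub_nonneg.2 hj), sq_nonneg (Δ-1-j),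
        sq_nonneg (j-2)]
  · have t1 : 0 ≤ i*j*((Δ-1-j)*((Δ-1-i)+(j-i))) := by
      apply mul_nonneg (by positivity)
      apply mul_nonneg (by omega) (by omega)
    have t2 : 0 ≤ i*j*((i-3)*(Δ-1-i)) := by
      apply mul_nonneg (by positivity)
      apply mul_nonneg (by omega) (by omega)
    have t3 : 0 ≤ i*j*((i-3)*(Δ-4)) := by
      apply mul_nonneg (by positivity)
      apply mul_nonneg (by omega) (by omega)
    have t4 : 0 ≤ i*((4*Δ-6) - 3*j) := mul_nonneg (by omega) (by omega)
    have t4' : 0 ≤ j*((4*Δ-6) - 3*i) := mul_nonneg (by omega) (by omega)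
    have t5 : 0 < i*j*(Δ-2) := by apply mul_pos (by positivity) (by omega)
    linarith [t1,t2,t3,t4,t4',t5]

lemma F_DD (Δ : ℕ) (hΔ : 4 ≤ Δ) :
    F Δ Δ Δ = ((Δ:ℝ)-1)*((Δ:ℝ)-2)*((Δ:ℝ)-3)/(Δ:ℝ) := by
  rw [F_delta Δ Δ (by omega) (by omega)]; ring_nf

lemma F_delta_pos (Δ i : ℕ) (hΔ : 4 ≤ Δ) (h3 : 3 ≤ i) (hi : i ≤ Δ) :
    0 < F Δ i Δ := by
  rw [F_delta Δ i (by omega) (by omega)]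
  have h1 : (3:ℝ) ≤ (i:ℝ) := by exact_mod_cast h3
  have h2 : (i:ℝ) ≤ (Δ:ℝ) := by exact_mod_cast hi
  have h4 : (4:ℝ) ≤ (Δ:ℝ) := by exact_mod_cast hΔ
  have e1 : (0:ℝ) < (i:ℝ)-1 := by linarith
  have e2 : (0:ℝ) < (i:ℝ)-2 := by linarith
  have e3 : (0:ℝ) < 2*(Δ:ℝ)-3-(i:ℝ) := by linarith
  exact div_pos (mul_pos (mul_pos e1 e2) e3) (by linarith)

lemma F_DD_pos (Δ : ℕ) (hΔ : 4 ≤ Δ) : 0 < F Δ Δ Δ := F_delta_pos Δ Δ hΔ (by omega) le_rfl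

lemma F_delta_nonneg (Δ i : ℕ) (hΔ : 4 ≤ Δ) (h1 : 1 ≤ i) (hi : i ≤ Δ) :
    0 ≤ F Δ i Δ := by
  rcases Nat.lt_or_ge i 3 with h | h
  · interval_cases i <;> rw [F_delta Δ _ (by omega) (by omega)] <;> norm_num
  · exact (F_delta_pos Δ i hΔ h hi).le

lemma F_one (Δ : ℕ) (hΔ : 4 ≤ Δ) : F Δ 1 Δ = 0 := by
  rw [F_delta Δ 1 le_rfl (by omega)]; norm_num

lemma F_two (Δ : ℕ) (hΔ : 4 ≤ Δ) : F Δ 2 Δ = 0 := by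
  rw [F_delta Δ 2 (by omega) (by omega)]; norm_num

lemma F_box (Δ i j : ℕ) (hΔ : 4 ≤ Δ) (hi1 : 1 ≤ i) (hi : i + 1 ≤ Δ) (hj1 : 1 ≤ j)
    (hj : j + 1 ≤ Δ) :
    ((Δ:ℝ)-2)*((Δ:ℝ)-3)/(Δ:ℝ) < F Δ i j := by
  wlog hij : i ≤ j generalizing i j
  · rw [F_comm]; exact this j i hj1 hj hi1 hi (by omega)
  have hD := intD (i:ℤ) (j:ℤ) (Δ:ℤ) (by exact_mod_cast hi1) (by exact_mod_cast hij)
    (by omega) (by exact_mod_cast hΔ)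
  have hN : (0:ℝ) < (4*(Δ:ℝ)-6)*((i:ℝ)+(j:ℝ)) + (i:ℝ)*(j:ℝ)*((Δ:ℝ)^2-7*(Δ:ℝ)+8)
      - (i:ℝ)*(j:ℝ)*((j:ℝ)-(i:ℝ))^2 := by
    have : ((i*j*(j-i)^2 : ℤ) : ℝ) < (((4*Δ-6)*(i+j) + i*j*(Δ^2-7*Δ+8) : ℤ) : ℝ) := by
      exact_mod_cast hD
    push_cast at this; linarith
  have hi0 : (0:ℝ) < (i:ℝ) := by exact_mod_cast hi1
  have hj0 : (0:ℝ) < (j:ℝ) := by exact_mod_cast hj1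
  have hΔ0 : (0:ℝ) < (Δ:ℝ) := by positivity
  have key : F Δ i j - ((Δ:ℝ)-2)*((Δ:ℝ)-3)/(Δ:ℝ)
      = ((4*(Δ:ℝ)-6)*((i:ℝ)+(j:ℝ)) + (i:ℝ)*(j:ℝ)*((Δ:ℝ)^2-7*(Δ:ℝ)+8)
          - (i:ℝ)*(j:ℝ)*((j:ℝ)-(i:ℝ))^2) / ((i:ℝ)*(j:ℝ)) := by
    simp only [F]; field_simp; ring
  have hq : (0:ℝ) < ((4*(Δ:ℝ)-6)*((i:ℝ)+(j:ℝ)) + (i:ℝ)*(j:ℝ)*((Δ:ℝ)^2-7*(Δ:ℝ)+8)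
      - (i:ℝ)*(j:ℝ)*((j:ℝ)-(i:ℝ))^2) / ((i:ℝ)*(j:ℝ)) := div_pos hN (by positivity)
  linarith [key, hq]

lemma c_pos (Δ : ℕ) (hΔ : 4 ≤ Δ) : (0:ℝ) < ((Δ:ℝ)-2)*((Δ:ℝ)-3)/(Δ:ℝ) := by
  have h4 : (4:ℝ) ≤ (Δ:ℝ) := by exact_mod_cast hΔ
  apply div_pos (by nlinarith) (by linarith)

lemma F_nonneg (Δ i j : ℕ) (hΔ : 4 ≤ Δ) (hi1 : 1 ≤ i) (hi : i ≤ Δ) (hj1 : 1 ≤ j) (hj : j ≤ Δ) :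
    0 ≤ F Δ i j := by
  rcases eq_or_lt_of_le hj with heq | hj'
  · rw [heq]; exact F_delta_nonneg Δ i hΔ hi1 hi
  rcases eq_or_lt_of_le hi with heq | hi'
  · rw [heq, F_comm]; exact F_delta_nonneg Δ j hΔ hj1 hj
  exact le_of_lt (lt_trans (c_pos Δ hΔ) (F_box Δ i j hΔ hi1 hi' hj1 hj'))

lemma sum_deg_filter {V : Type*} [Fintype V] [DecidableEq V] (G : SimpleGraph V)
    [DecidableRel G.Adj] (p : V → Prop) [DecidablePred p] :
    ∑ v ∈ univ.filter p, G.degree v =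
      ∑ e ∈ G.edgeFinset,
        Sym2.lift ⟨fun a b => (if p a then 1 else 0) + (if p b then 1 else 0),
          by intro a b; exact Nat.add_comm _ _⟩ e := by
  calc ∑ v ∈ univ.filter p, G.degree v
      = ∑ v ∈ univ.filter p, (G.edgeFinset.filter (fun e => v ∈ e)).card := by
        refine sum_congr rfl fun v _ => ?_
        rw [← SimpleGraph.card_incidenceFinset_eq_degree, SimpleGraph.incidenceFinset_eq_filter]
    _ = ∑ v ∈ univ.filter p, ∑ e ∈ G.edgeFinset, if v ∈ e then 1 else 0 := by
        refine sum_congr rfl fun v _ => ?_; rw [Finset.card_filter]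
    _ = ∑ e ∈ G.edgeFinset, ∑ v ∈ univ.filter p, if v ∈ e then 1 else 0 := Finset.sum_comm
    _ = _ := by
        refine sum_congr rfl fun e he => ?_
        induction e with
        | _ u v =>
          rw [SimpleGraph.mem_edgeFinset, SimpleGraph.mem_edgeSet] at he
          have hne : u ≠ v := he.ne
          rw [Sym2.lift_mk]
          have h1 : ∑ x ∈ univ.filter p, (if x ∈ s(u,v) then 1 else 0)
              = ((univ.filter p).filter (fun x => x = u ∨ x = v)).card := by
            rw [Finset.card_filter]
            refine sum_congr rfl fun x _ => ?_
            simp [Sym2.mem_iff]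
          rw [h1]
          have h2 : (univ.filter p).filter (fun x => x = u ∨ x = v)
              = ({u, v} : Finset V).filter p := by
            ext x; simp only [mem_filter, mem_univ, true_and, mem_insert, mem_singleton]
            tauto
          rw [h2, Finset.card_filter, Finset.sum_pair hne]

set_option maxHeartbeats 1600000 in
open scoped Classical in
/-- Structure of trees attaining the minimum penalty `F(Δ,Δ)` when `Δ ∣ n`:
exactly one `(Δ,Δ)`-edge, all other edges of type `(1,Δ)` or `(2,Δ)`, and the
vertex and edge counts are uniquely determined. -/
theorem penalty_eq_F_DeltaDelta_structure {V : Type*} [Fintype V]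
    (G : SimpleGraph V) (hT : G.IsTree)
    (Δ n : ℕ) (hΔ : 4 ≤ Δ) (hcard : Fintype.card V = n) (hdvd : Δ ∣ n)
    (hmax : ∀ v, G.degree v ≤ Δ) (hex : ∃ v, G.degree v = Δ)
    (hP : ∑ e ∈ G.edgeFinset,
        Sym2.lift ⟨fun u v => F Δ (G.degree u) (G.degree v),
          by intro a b; simp only [F]; ring⟩ e = F Δ Δ Δ) :
    (G.edgeFinset.filter (fun e => ∀ v ∈ e, G.degree v = Δ)).card = 1
      ∧ (∀ u v, G.Adj u v →
          (G.degree u = Δ ∧ G.degree v = Δ)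
          ∨ (G.degree u = 1 ∧ G.degree v = Δ)
          ∨ (G.degree u = Δ ∧ G.degree v = 1)
          ∨ (G.degree u = 2 ∧ G.degree v = Δ)
          ∨ (G.degree u = Δ ∧ G.degree v = 2))
      ∧ (Finset.univ.filter (fun v => G.degree v = Δ)).card = n / Δ
      ∧ (Finset.univ.filter (fun v => G.degree v = 2)).card = n / Δ - 2
      ∧ (Finset.univ.filter (fun v => G.degree v = 1)).card
          = (Δ - 2) * (n / Δ) + 2
      ∧ (G.edgeFinset.filter
          (fun e => ∃ u v, e = s(u, v) ∧ G.degree u = 1 ∧ G.degree v = Δ)).card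
          = (Finset.univ.filter (fun v => G.degree v = 1)).card
      ∧ (G.edgeFinset.filter
          (fun e => ∃ u v, e = s(u, v) ∧ G.degree u = 2 ∧ G.degree v = Δ)).card
          = 2 * (Finset.univ.filter (fun v => G.degree v = 2)).card := by
  obtain ⟨w0, hw0⟩ := hex
  -- every vertex has positive degree
  have hdegpos : ∀ v, 1 ≤ G.degree v := by
    intro v
    rcases eq_or_ne v w0 with rfl | hne
    · omega
    · have hr : G.Reachable v w0 := hT.isConnected.preconnected v w0
      obtain ⟨p⟩ := hr
      cases p with
      | nil => exact absurd rfl hne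
      | cons h q =>
        have := (G.degree_pos_iff_exists_adj v).2 ⟨_, h⟩
        omega
  have hrep : ∀ e ∈ G.edgeFinset, ∃ u v : V, e = s(u,v) ∧ G.Adj u v := by
    intro e he
    induction e with
    | _ u v => exact ⟨u, v, rfl, by rwa [SimpleGraph.mem_edgeFinset, SimpleGraph.mem_edgeSet] at he⟩
  have hball : ∀ (p : V → Prop) (u v : V), (∀ x ∈ s(u,v), p x) ↔ p u ∧ p v := by
    intro p u v
    constructor
    · intro h; exact ⟨h u (Sym2.mem_mk_left u v), h v (Sym2.mem_mk_right u v)⟩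
    · rintro ⟨h1, h2⟩ x hx
      rcases Sym2.mem_iff.1 hx with rfl | rfl <;> assumption
  have hP1iff : ∀ u v : V, (∃ a b, s(u,v) = s(a,b) ∧ G.degree a = 1 ∧ G.degree b = Δ) ↔
      ((G.degree u = 1 ∧ G.degree v = Δ) ∨ (G.degree v = 1 ∧ G.degree u = Δ)) := by
    intro u v
    constructor
    · rintro ⟨a, b, hab, h1, h2⟩
      rcases Sym2.eq_iff.1 hab with ⟨rfl, rfl⟩ | ⟨rfl, rfl⟩
      · exact Or.inl ⟨h1, h2⟩
      · exact Or.inr ⟨h1, h2⟩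
    · rintro (⟨h1, h2⟩ | ⟨h1, h2⟩)
      · exact ⟨u, v, rfl, h1, h2⟩
      · exact ⟨v, u, Sym2.eq_swap.symm, h1, h2⟩
  have hP2iff : ∀ u v : V, (∃ a b, s(u,v) = s(a,b) ∧ G.degree a = 2 ∧ G.degree b = Δ) ↔
      ((G.degree u = 2 ∧ G.degree v = Δ) ∨ (G.degree v = 2 ∧ G.degree u = Δ)) := by
    intro u v
    constructor
    · rintro ⟨a, b, hab, h1, h2⟩
      rcases Sym2.eq_iff.1 hab with ⟨rfl, rfl⟩ | ⟨rfl, rfl⟩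
      · exact Or.inl ⟨h1, h2⟩
      · exact Or.inr ⟨h1, h2⟩
    · rintro (⟨h1, h2⟩ | ⟨h1, h2⟩)
      · exact ⟨u, v, rfl, h1, h2⟩
      · exact ⟨v, u, Sym2.eq_swap.symm, h1, h2⟩
  set W : Sym2 V → ℝ :=
    Sym2.lift ⟨fun u v => F Δ (G.degree u) (G.degree v), by intro a b; exact F_comm Δ (G.degree a) (G.degree b)⟩ with hWdef
  have hPW : ∑ e ∈ G.edgeFinset, W e = F Δ Δ Δ := hP
  have hWs : ∀ u v : V, W s(u,v) = F Δ (G.degree u) (G.degree v) := by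
    intro u v; rw [hWdef, Sym2.lift_mk]
  -- the three edge classes
  set EDD := G.edgeFinset.filter (fun e => ∀ v ∈ e, G.degree v = Δ) with hEDDdef
  set NDD := G.edgeFinset.filter (fun e => ¬ ∀ v ∈ e, G.degree v = Δ) with hNDDdef
  set Ebad := NDD.filter (fun e =>
      ¬ ((∃ u v, e = s(u, v) ∧ G.degree u = 1 ∧ G.degree v = Δ)
        ∨ (∃ u v, e = s(u, v) ∧ G.degree u = 2 ∧ G.degree v = Δ))) with hEbaddef
  -- basic degree bounds at edges
  have hdegA : ∀ u v : V, G.Adj u v → (1 ≤ G.degree u ∧ G.degree u ≤ Δ ∧ 1 ≤ G.degree v ∧ G.degree v ≤ Δ) :=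
    fun u v _ => ⟨hdegpos u, hmax u, hdegpos v, hmax v⟩
  -- value of W on the (Δ,Δ) class
  have hEDDval : ∀ e ∈ EDD, W e = F Δ Δ Δ := by
    intro e he
    rw [hEDDdef, mem_filter] at he
    obtain ⟨u, v, rfl, hadj⟩ := hrep e he.1
    have := (hball _ u v).1 he.2
    rw [hWs, this.1, this.2]
  -- value of W on good edges
  have hgoodval : ∀ e ∈ G.edgeFinset,
      ((∃ u v, e = s(u, v) ∧ G.degree u = 1 ∧ G.degree v = Δ)
        ∨ (∃ u v, e = s(u, v) ∧ G.degree u = 2 ∧ G.degree v = Δ)) → W e = 0 := by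
    intro e he hg
    obtain ⟨u, v, rfl, hadj⟩ := hrep e he
    rcases hg with hg | hg
    · rcases (hP1iff u v).1 hg with ⟨h1, h2⟩ | ⟨h1, h2⟩
      · rw [hWs, h1, h2]; exact F_one Δ hΔ
      · rw [hWs, h1, h2, F_comm]; exact F_one Δ hΔ
    · rcases (hP2iff u v).1 hg with ⟨h1, h2⟩ | ⟨h1, h2⟩
      · rw [hWs, h1, h2]; exact F_two Δ hΔ
      · rw [hWs, h1, h2, F_comm]; exact F_two Δ hΔ
  -- positivity of W on bad edges
  have hbadpos : ∀ e ∈ Ebad, 0 < W e := by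
    intro e he
    rw [hEbaddef, mem_filter, hNDDdef, mem_filter] at he
    obtain ⟨⟨hef, hnDD⟩, hng⟩ := he
    obtain ⟨u, v, rfl, hadj⟩ := hrep _ hef
    obtain ⟨hu1, huΔ, hv1, hvΔ⟩ := hdegA u v hadj
    rw [hWs]
    have hnDD' : ¬ (G.degree u = Δ ∧ G.degree v = Δ) := fun h => hnDD ((hball _ u v).2 h)
    have hn1 : ¬ (G.degree u = 1 ∧ G.degree v = Δ) ∧ ¬ (G.degree v = 1 ∧ G.degree u = Δ) := by
      constructor <;> intro h <;> exact hng (Or.inl ((hP1iff u v).2 (by tauto)))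
    have hn2 : ¬ (G.degree u = 2 ∧ G.degree v = Δ) ∧ ¬ (G.degree v = 2 ∧ G.degree u = Δ) := by
      constructor <;> intro h <;> exact hng (Or.inr ((hP2iff u v).2 (by tauto)))
    by_cases hu : G.degree u = Δ
    · -- then deg v ∉ {1,2,Δ}
      have h3 : 3 ≤ G.degree v := by
        rcases hn1 with ⟨_, b1⟩; rcases hn2 with ⟨_, b2⟩
        have : G.degree v ≠ 1 := fun h => b1 ⟨h, hu⟩
        have : G.degree v ≠ 2 := fun h => b2 ⟨h, hu⟩
        omega
      rw [hu, F_comm]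
      exact F_delta_pos Δ _ hΔ h3 hvΔ
    by_cases hv : G.degree v = Δ
    · have h3 : 3 ≤ G.degree u := by
        rcases hn1 with ⟨b1, _⟩; rcases hn2 with ⟨b2, _⟩
        have : G.degree u ≠ 1 := fun h => b1 ⟨h, hv⟩
        have : G.degree u ≠ 2 := fun h => b2 ⟨h, hv⟩
        omega
      rw [hv]
      exact F_delta_pos Δ _ hΔ h3 huΔ
    · exact lt_trans (c_pos Δ hΔ) (F_box Δ _ _ hΔ hu1 (by omega) hv1 (by omega))
  -- the key equation
  have hkey : (EDD.card : ℝ) * F Δ Δ Δ + ∑ e ∈ Ebad, W e = F Δ Δ Δ := by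
    have hsplit1 : ∑ e ∈ G.edgeFinset, W e = ∑ e ∈ EDD, W e + ∑ e ∈ NDD, W e :=
      (sum_filter_add_sum_filter_not _ _ _).symm
    have hsplit2 : ∑ e ∈ NDD, W e
        = ∑ e ∈ NDD.filter (fun e =>
            ((∃ u v, e = s(u, v) ∧ G.degree u = 1 ∧ G.degree v = Δ)
              ∨ (∃ u v, e = s(u, v) ∧ G.degree u = 2 ∧ G.degree v = Δ))), W e
          + ∑ e ∈ Ebad, W e :=
      (sum_filter_add_sum_filter_not _ _ _).symm
    have h1 : ∑ e ∈ EDD, W e = (EDD.card : ℝ) * F Δ Δ Δ := by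
      rw [sum_congr rfl hEDDval, sum_const, nsmul_eq_mul]
    have h2 : ∑ e ∈ NDD.filter (fun e =>
            ((∃ u v, e = s(u, v) ∧ G.degree u = 1 ∧ G.degree v = Δ)
              ∨ (∃ u v, e = s(u, v) ∧ G.degree u = 2 ∧ G.degree v = Δ))), W e = 0 := by
      apply sum_eq_zero
      intro e he
      rw [mem_filter, hNDDdef, mem_filter] at he
      exact hgoodval e he.1.1 he.2
    rw [hsplit1, hsplit2, h1, h2] at hPW
    linarith [hPW]
  have hbadnonneg : (0:ℝ) ≤ ∑ e ∈ Ebad, W e := sum_nonneg fun e he => (hbadpos e he).le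
  have hFpos := F_DD_pos Δ hΔ
  have hedgecard : G.edgeFinset.card + 1 = n := by rw [← hcard]; exact hT.card_edgeFinset
  -- rule out EDD.card = 0
  have hknot0 : EDD.card ≠ 0 := by
    intro h0
    have hEDDempty : EDD = ∅ := card_eq_zero.1 h0
    set Z := G.edgeFinset.filter (fun e => ∀ x ∈ e, G.degree x ≠ Δ) with hZdef
    -- counting the incidences at Δ-vertices
    have hsd := sum_deg_filter G (fun v => G.degree v = Δ)
    have hlhs : ∑ v ∈ univ.filter (fun v => G.degree v = Δ), G.degree v
        = (univ.filter (fun v => G.degree v = Δ)).card * Δ := by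
      rw [sum_congr rfl (fun v hv => (mem_filter.1 hv).2), sum_const, smul_eq_mul]
    have hper : ∀ e ∈ G.edgeFinset,
        (Sym2.lift ⟨fun a b => (if G.degree a = Δ then 1 else 0) + (if G.degree b = Δ then 1 else 0),
          by intro a b; exact Nat.add_comm _ _⟩ e)
          + (if (∀ x ∈ e, G.degree x ≠ Δ) then 1 else 0) = 1 := by
      intro e he
      obtain ⟨u, v, rfl, hadj⟩ := hrep e he
      rw [Sym2.lift_mk]
      simp only [hball (fun x => G.degree x ≠ Δ) u v]
      by_cases hu : G.degree u = Δ
      · by_cases hv : G.degree v = Δ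
        · exfalso
          have : s(u,v) ∈ EDD := by
            rw [hEDDdef, mem_filter]
            exact ⟨he, (hball _ u v).2 ⟨hu, hv⟩⟩
          rw [hEDDempty] at this
          exact absurd this (notMem_empty _)
        · simp [hu, hv]
      · by_cases hv : G.degree v = Δ
        · simp [hu, hv]
        · simp [hu, hv]
    have hzcard : ∑ e ∈ G.edgeFinset, (if (∀ x ∈ e, G.degree x ≠ Δ) then 1 else 0) = Z.card := by
      rw [hZdef, Finset.card_filter]
    have hcnt : (univ.filter (fun v => G.degree v = Δ)).card * Δ + Z.card + 1 = n := by
      have h1 : ∑ e ∈ G.edgeFinset,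
          ((Sym2.lift ⟨fun a b => (if G.degree a = Δ then 1 else 0) + (if G.degree b = Δ then 1 else 0),
            by intro a b; exact Nat.add_comm _ _⟩ e)
            + (if (∀ x ∈ e, G.degree x ≠ Δ) then 1 else 0)) = G.edgeFinset.card := by
        rw [sum_congr rfl hper, sum_const, smul_eq_mul, mul_one]
      rw [sum_add_distrib, hzcard] at h1
      rw [← hlhs, hsd]
      omega
    -- Z.card ≥ Δ - 1
    obtain ⟨t, ht⟩ := hdvd
    have hzge : Δ ≤ Z.card + 1 := by
      rcases Nat.lt_or_ge (univ.filter (fun v => G.degree v = Δ)).card t with h | h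
      · have h3 : ((univ.filter (fun v => G.degree v = Δ)).card + 1) * Δ ≤ t * Δ :=
          Nat.mul_le_mul_right Δ h
        have h4 : ((univ.filter (fun v => G.degree v = Δ)).card + 1) * Δ
            = (univ.filter (fun v => G.degree v = Δ)).card * Δ + Δ := by ring
        have h5 : n = t * Δ := by rw [ht]; ring
        linarith
      · have h3 : t * Δ ≤ (univ.filter (fun v => G.degree v = Δ)).card * Δ :=
          Nat.mul_le_mul_right Δ h
        have h5 : n = t * Δ := by rw [ht]; ring
        linarith
    -- Z is contained in Ebad
    have hZsub : Z ⊆ Ebad := by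
      intro e heZ
      rw [hZdef, mem_filter] at heZ
      obtain ⟨hef, hall⟩ := heZ
      rw [hEbaddef, mem_filter, hNDDdef, mem_filter]
      obtain ⟨u, v, rfl, hadj⟩ := hrep e hef
      refine ⟨⟨hef, ?_⟩, ?_⟩
      · intro hPDD
        exact hall u (Sym2.mem_mk_left u v) (hPDD u (Sym2.mem_mk_left u v))
      · rintro (⟨a, b, heq, h1, h2⟩ | ⟨a, b, heq, h1, h2⟩) <;>
          exact hall b (heq ▸ Sym2.mem_mk_right a b) h2
    have hZlb : ∀ e ∈ Z, ((Δ:ℝ)-2)*((Δ:ℝ)-3)/(Δ:ℝ) < W e := by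
      intro e heZ
      rw [hZdef, mem_filter] at heZ
      obtain ⟨hef, hall⟩ := heZ
      obtain ⟨u, v, rfl, hadj⟩ := hrep e hef
      obtain ⟨hu1, huΔ, hv1, hvΔ⟩ := hdegA u v hadj
      have hu : G.degree u ≠ Δ := hall u (Sym2.mem_mk_left u v)
      have hv : G.degree v ≠ Δ := hall v (Sym2.mem_mk_right u v)
      rw [hWs]
      exact F_box Δ _ _ hΔ hu1 (by omega) hv1 (by omega)
    have hZne : Z.Nonempty := card_pos.1 (by omega)
    have hlt : ∑ _e ∈ Z, ((Δ:ℝ)-2)*((Δ:ℝ)-3)/(Δ:ℝ) < ∑ e ∈ Z, W e :=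
      sum_lt_sum_of_nonempty hZne hZlb
    have hsumconst : ∑ _e ∈ Z, ((Δ:ℝ)-2)*((Δ:ℝ)-3)/(Δ:ℝ)
        = (Z.card : ℝ) * (((Δ:ℝ)-2)*((Δ:ℝ)-3)/(Δ:ℝ)) := by
      rw [sum_const, nsmul_eq_mul]
    have hcast : (Δ:ℝ) - 1 ≤ (Z.card : ℝ) := by
      have : (Δ:ℝ) ≤ (Z.card : ℝ) + 1 := by exact_mod_cast hzge
      linarith
    have hge : F Δ Δ Δ ≤ (Z.card : ℝ) * (((Δ:ℝ)-2)*((Δ:ℝ)-3)/(Δ:ℝ)) := by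
      have hF : F Δ Δ Δ = ((Δ:ℝ)-1) * (((Δ:ℝ)-2)*((Δ:ℝ)-3)/(Δ:ℝ)) := by
        rw [F_DD Δ hΔ]; ring
      rw [hF]
      exact mul_le_mul_of_nonneg_right hcast (c_pos Δ hΔ).le
    have hle2 : ∑ e ∈ Z, W e ≤ ∑ e ∈ Ebad, W e :=
      sum_le_sum_of_subset_of_nonneg hZsub (fun e he _ => (hbadpos e he).le)
    rw [h0] at hkey
    push_cast at hkey
    linarith
  -- rule out EDD.card ≥ 2
  have hknot2 : EDD.card < 2 := by
    by_contra h2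
    push_neg at h2
    have h2' : (2:ℝ) ≤ (EDD.card : ℝ) := by exact_mod_cast h2
    nlinarith [hFpos, hbadnonneg, hkey]
  have hk1 : EDD.card = 1 := by omega
  -- bad edges vanish
  have hbadzero : ∑ e ∈ Ebad, W e = 0 := by
    rw [hk1] at hkey; push_cast at hkey; linarith
  have hbadempty : Ebad = ∅ := by
    by_contra hne
    have hne' : Ebad.Nonempty := Finset.nonempty_iff_ne_empty.2 hne
    have := sum_pos hbadpos hne'
    linarith
  -- structure of all edges
  have hstruct : ∀ e ∈ G.edgeFinset, (∀ v ∈ e, G.degree v = Δ)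
      ∨ (∃ u v, e = s(u,v) ∧ G.degree u = 1 ∧ G.degree v = Δ)
      ∨ (∃ u v, e = s(u,v) ∧ G.degree u = 2 ∧ G.degree v = Δ) := by
    intro e he
    by_contra h
    have h1 : ¬ (∀ v ∈ e, G.degree v = Δ) := fun hh => h (Or.inl hh)
    have h2 : ¬ (∃ u v, e = s(u,v) ∧ G.degree u = 1 ∧ G.degree v = Δ) :=
      fun hh => h (Or.inr (Or.inl hh))
    have h3 : ¬ (∃ u v, e = s(u,v) ∧ G.degree u = 2 ∧ G.degree v = Δ) :=
      fun hh => h (Or.inr (Or.inr hh))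
    have : e ∈ Ebad := by
      rw [hEbaddef, mem_filter, hNDDdef, mem_filter]
      exact ⟨⟨he, h1⟩, fun hh => hh.elim h2 h3⟩
    rw [hbadempty] at this
    exact absurd this (notMem_empty _)
  -- conclusion 2
  have hconc2 : ∀ u v, G.Adj u v →
      (G.degree u = Δ ∧ G.degree v = Δ)
      ∨ (G.degree u = 1 ∧ G.degree v = Δ)
      ∨ (G.degree u = Δ ∧ G.degree v = 1)
      ∨ (G.degree u = 2 ∧ G.degree v = Δ)
      ∨ (G.degree u = Δ ∧ G.degree v = 2) := by
    intro u v huv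
    have he : s(u,v) ∈ G.edgeFinset := by
      rw [SimpleGraph.mem_edgeFinset]
      exact G.mem_edgeSet.2 huv
    rcases hstruct _ he with h | h | h
    · exact Or.inl ((hball _ u v).1 h)
    · rcases (hP1iff u v).1 h with ⟨h1, h2⟩ | ⟨h1, h2⟩
      · exact Or.inr (Or.inl ⟨h1, h2⟩)
      · exact Or.inr (Or.inr (Or.inl ⟨h2, h1⟩))
    · rcases (hP2iff u v).1 h with ⟨h1, h2⟩ | ⟨h1, h2⟩
      · exact Or.inr (Or.inr (Or.inr (Or.inl ⟨h1, h2⟩)))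
      · exact Or.inr (Or.inr (Or.inr (Or.inr ⟨h2, h1⟩)))
  -- all degrees are 1, 2 or Δ
  have hdeg123 : ∀ v, G.degree v = 1 ∨ G.degree v = 2 ∨ G.degree v = Δ := by
    intro v
    obtain ⟨w, hw⟩ := (G.degree_pos_iff_exists_adj v).1 (hdegpos v)
    rcases hconc2 v w hw with ⟨h, _⟩ | ⟨h, _⟩ | ⟨h, _⟩ | ⟨h, _⟩ | ⟨h, _⟩ <;> tauto
  -- exclusivity
  have hexcl1 : ∀ e : Sym2 V, (∃ u v, e = s(u,v) ∧ G.degree u = 1 ∧ G.degree v = Δ) →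
      ¬(∀ v ∈ e, G.degree v = Δ) := by
    rintro e ⟨a, b, rfl, h1, h2⟩ hall
    have := hall a (Sym2.mem_mk_left a b); omega
  have hexcl2 : ∀ e : Sym2 V, (∃ u v, e = s(u,v) ∧ G.degree u = 2 ∧ G.degree v = Δ) →
      ¬(∀ v ∈ e, G.degree v = Δ) := by
    rintro e ⟨a, b, rfl, h1, h2⟩ hall
    have := hall a (Sym2.mem_mk_left a b); omega
  have hexcl12 : ∀ e : Sym2 V, (∃ u v, e = s(u,v) ∧ G.degree u = 2 ∧ G.degree v = Δ) →
      ¬(∃ u v, e = s(u,v) ∧ G.degree u = 1 ∧ G.degree v = Δ) := by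
    rintro e ⟨a, b, rfl, h2a, h2b⟩ hp1
    rcases (hP1iff a b).1 hp1 with ⟨x1, x2⟩ | ⟨x1, x2⟩ <;> omega
  -- generic class-splitting of edge sums
  have hsplit3 : ∀ (f : Sym2 V → ℕ) (aD a1 a2 : ℕ),
      (∀ e ∈ G.edgeFinset, (∀ v ∈ e, G.degree v = Δ) → f e = aD) →
      (∀ e ∈ G.edgeFinset, (∃ u v, e = s(u,v) ∧ G.degree u = 1 ∧ G.degree v = Δ) → f e = a1) →
      (∀ e ∈ G.edgeFinset, (∃ u v, e = s(u,v) ∧ G.degree u = 2 ∧ G.degree v = Δ) → f e = a2) →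
      ∑ e ∈ G.edgeFinset, f e =
        EDD.card * aD
        + (G.edgeFinset.filter (fun e => ∃ u v, e = s(u, v) ∧ G.degree u = 1 ∧ G.degree v = Δ)).card * a1
        + (G.edgeFinset.filter (fun e => ∃ u v, e = s(u, v) ∧ G.degree u = 2 ∧ G.degree v = Δ)).card * a2 := by
    intro f aD a1 a2 hfD hf1 hf2
    have e1 : ∑ e ∈ G.edgeFinset, f e = ∑ e ∈ EDD, f e + ∑ e ∈ NDD, f e :=
      (sum_filter_add_sum_filter_not _ _ _).symm
    have e2 : ∑ e ∈ NDD, f e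
        = ∑ e ∈ NDD.filter (fun e => ∃ u v, e = s(u, v) ∧ G.degree u = 1 ∧ G.degree v = Δ), f e
          + ∑ e ∈ NDD.filter (fun e => ¬ ∃ u v, e = s(u, v) ∧ G.degree u = 1 ∧ G.degree v = Δ), f e :=
      (sum_filter_add_sum_filter_not _ _ _).symm
    have hs1 : NDD.filter (fun e => ∃ u v, e = s(u, v) ∧ G.degree u = 1 ∧ G.degree v = Δ)
        = G.edgeFinset.filter (fun e => ∃ u v, e = s(u, v) ∧ G.degree u = 1 ∧ G.degree v = Δ) := by
      rw [hNDDdef, filter_filter]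
      ext e
      simp only [mem_filter]
      constructor
      · rintro ⟨he, _, hp⟩; exact ⟨he, hp⟩
      · rintro ⟨he, hp⟩; exact ⟨he, hexcl1 e hp, hp⟩
    have hs2 : NDD.filter (fun e => ¬ ∃ u v, e = s(u, v) ∧ G.degree u = 1 ∧ G.degree v = Δ)
        = G.edgeFinset.filter (fun e => ∃ u v, e = s(u, v) ∧ G.degree u = 2 ∧ G.degree v = Δ) := by
      rw [hNDDdef, filter_filter]
      ext e
      simp only [mem_filter]
      constructor
      · rintro ⟨he, hnD, hn1⟩
        rcases hstruct e he with h | h | h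
        · exact absurd h hnD
        · exact absurd h hn1
        · exact ⟨he, h⟩
      · rintro ⟨he, hp⟩; exact ⟨he, hexcl2 e hp, hexcl12 e hp⟩
    have v1 : ∑ e ∈ EDD, f e = EDD.card * aD := by
      calc ∑ e ∈ EDD, f e = ∑ _e ∈ EDD, aD := sum_congr rfl (fun e he => by
            rw [hEDDdef, mem_filter] at he
            exact hfD e he.1 he.2)
        _ = EDD.card * aD := by rw [sum_const, smul_eq_mul]
    have v2 : ∑ e ∈ G.edgeFinset.filter (fun e => ∃ u v, e = s(u, v) ∧ G.degree u = 1 ∧ G.degree v = Δ), f e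
        = (G.edgeFinset.filter (fun e => ∃ u v, e = s(u, v) ∧ G.degree u = 1 ∧ G.degree v = Δ)).card * a1 := by
      calc ∑ e ∈ G.edgeFinset.filter (fun e => ∃ u v, e = s(u, v) ∧ G.degree u = 1 ∧ G.degree v = Δ), f e
          = ∑ _e ∈ G.edgeFinset.filter (fun e => ∃ u v, e = s(u, v) ∧ G.degree u = 1 ∧ G.degree v = Δ), a1 :=
            sum_congr rfl (fun e he => by
              rw [mem_filter] at he
              exact hf1 e he.1 he.2)
        _ = _ := by rw [sum_const, smul_eq_mul]
    have v3 : ∑ e ∈ G.edgeFinset.filter (fun e => ∃ u v, e = s(u, v) ∧ G.degree u = 2 ∧ G.degree v = Δ), f e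
        = (G.edgeFinset.filter (fun e => ∃ u v, e = s(u, v) ∧ G.degree u = 2 ∧ G.degree v = Δ)).card * a2 := by
      calc ∑ e ∈ G.edgeFinset.filter (fun e => ∃ u v, e = s(u, v) ∧ G.degree u = 2 ∧ G.degree v = Δ), f e
          = ∑ _e ∈ G.edgeFinset.filter (fun e => ∃ u v, e = s(u, v) ∧ G.degree u = 2 ∧ G.degree v = Δ), a2 :=
            sum_congr rfl (fun e he => by
              rw [mem_filter] at he
              exact hf2 e he.1 he.2)
        _ = _ := by rw [sum_const, smul_eq_mul]
    rw [e1, e2, hs1, hs2, v1, v2, v3]; ring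
  -- incidence count at Δ-vertices
  have hDcount : (univ.filter (fun v => G.degree v = Δ)).card * Δ
      = EDD.card * 2
        + (G.edgeFinset.filter (fun e => ∃ u v, e = s(u, v) ∧ G.degree u = 1 ∧ G.degree v = Δ)).card * 1
        + (G.edgeFinset.filter (fun e => ∃ u v, e = s(u, v) ∧ G.degree u = 2 ∧ G.degree v = Δ)).card * 1 := by
    have hlhs : ∑ v ∈ univ.filter (fun v => G.degree v = Δ), G.degree v
        = (univ.filter (fun v => G.degree v = Δ)).card * Δ := by
      rw [sum_congr rfl (fun v hv => (mem_filter.1 hv).2), sum_const, smul_eq_mul]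
    rw [← hlhs, sum_deg_filter G (fun v => G.degree v = Δ)]
    refine hsplit3 _ 2 1 1 ?_ ?_ ?_
    · intro e he hp
      obtain ⟨u, v, rfl, _⟩ := hrep e he
      obtain ⟨hu, hv⟩ := (hball _ u v).1 hp
      rw [Sym2.lift_mk]
      show (if G.degree u = Δ then 1 else 0) + (if G.degree v = Δ then 1 else 0) = 2
      rw [if_pos hu, if_pos hv]
    · rintro e he ⟨a, b, rfl, h1, h2⟩
      rw [Sym2.lift_mk]
      show (if G.degree a = Δ then 1 else 0) + (if G.degree b = Δ then 1 else 0) = 1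
      rw [if_neg (by omega), if_pos h2]
    · rintro e he ⟨a, b, rfl, h1, h2⟩
      rw [Sym2.lift_mk]
      show (if G.degree a = Δ then 1 else 0) + (if G.degree b = Δ then 1 else 0) = 1
      rw [if_neg (by omega), if_pos h2]
  -- incidence count at degree-1 vertices
  have h1count : (univ.filter (fun v => G.degree v = 1)).card * 1
      = EDD.card * 0
        + (G.edgeFinset.filter (fun e => ∃ u v, e = s(u, v) ∧ G.degree u = 1 ∧ G.degree v = Δ)).card * 1
        + (G.edgeFinset.filter (fun e => ∃ u v, e = s(u, v) ∧ G.degree u = 2 ∧ G.degree v = Δ)).card * 0 := by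
    have hlhs : ∑ v ∈ univ.filter (fun v => G.degree v = 1), G.degree v
        = (univ.filter (fun v => G.degree v = 1)).card * 1 := by
      rw [sum_congr rfl (fun v hv => (mem_filter.1 hv).2), sum_const, smul_eq_mul]
    rw [← hlhs, sum_deg_filter G (fun v => G.degree v = 1)]
    refine hsplit3 _ 0 1 0 ?_ ?_ ?_
    · intro e he hp
      obtain ⟨u, v, rfl, _⟩ := hrep e he
      obtain ⟨hu, hv⟩ := (hball _ u v).1 hp
      rw [Sym2.lift_mk]
      show (if G.degree u = 1 then 1 else 0) + (if G.degree v = 1 then 1 else 0) = 0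
      rw [if_neg (by omega), if_neg (by omega)]
    · rintro e he ⟨a, b, rfl, h1, h2⟩
      rw [Sym2.lift_mk]
      show (if G.degree a = 1 then 1 else 0) + (if G.degree b = 1 then 1 else 0) = 1
      rw [if_pos h1, if_neg (by omega)]
    · rintro e he ⟨a, b, rfl, h1, h2⟩
      rw [Sym2.lift_mk]
      show (if G.degree a = 1 then 1 else 0) + (if G.degree b = 1 then 1 else 0) = 0
      rw [if_neg (by omega), if_neg (by omega)]
  -- incidence count at degree-2 vertices
  have h2count : (univ.filter (fun v => G.degree v = 2)).card * 2
      = EDD.card * 0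
        + (G.edgeFinset.filter (fun e => ∃ u v, e = s(u, v) ∧ G.degree u = 1 ∧ G.degree v = Δ)).card * 0
        + (G.edgeFinset.filter (fun e => ∃ u v, e = s(u, v) ∧ G.degree u = 2 ∧ G.degree v = Δ)).card * 1 := by
    have hlhs : ∑ v ∈ univ.filter (fun v => G.degree v = 2), G.degree v
        = (univ.filter (fun v => G.degree v = 2)).card * 2 := by
      rw [sum_congr rfl (fun v hv => (mem_filter.1 hv).2), sum_const, smul_eq_mul]
    rw [← hlhs, sum_deg_filter G (fun v => G.degree v = 2)]
    refine hsplit3 _ 0 0 1 ?_ ?_ ?_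
    · intro e he hp
      obtain ⟨u, v, rfl, _⟩ := hrep e he
      obtain ⟨hu, hv⟩ := (hball _ u v).1 hp
      rw [Sym2.lift_mk]
      show (if G.degree u = 2 then 1 else 0) + (if G.degree v = 2 then 1 else 0) = 0
      rw [if_neg (by omega), if_neg (by omega)]
    · rintro e he ⟨a, b, rfl, h1, h2⟩
      rw [Sym2.lift_mk]
      show (if G.degree a = 2 then 1 else 0) + (if G.degree b = 2 then 1 else 0) = 0
      rw [if_neg (by omega), if_neg (by omega)]
    · rintro e he ⟨a, b, rfl, h1, h2⟩
      rw [Sym2.lift_mk]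
      show (if G.degree a = 2 then 1 else 0) + (if G.degree b = 2 then 1 else 0) = 1
      rw [if_pos h1, if_neg (by omega)]
  -- edge count
  have hecount : G.edgeFinset.card
      = EDD.card * 1
        + (G.edgeFinset.filter (fun e => ∃ u v, e = s(u, v) ∧ G.degree u = 1 ∧ G.degree v = Δ)).card * 1
        + (G.edgeFinset.filter (fun e => ∃ u v, e = s(u, v) ∧ G.degree u = 2 ∧ G.degree v = Δ)).card * 1 := by
    have := hsplit3 (fun _ => 1) 1 1 1 (fun _ _ _ => rfl) (fun _ _ _ => rfl) (fun _ _ _ => rfl)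
    rw [sum_const, smul_eq_mul, mul_one] at this
    exact this
  -- vertex partition
  have hvert : (univ.filter (fun v => G.degree v = 1)).card
      + (univ.filter (fun v => G.degree v = 2)).card
      + (univ.filter (fun v => G.degree v = Δ)).card = n := by
    have t1 := card_filter_add_card_filter_not (s := (univ : Finset V))
      (p := fun v => G.degree v = 1)
    have t2 := card_filter_add_card_filter_not
      (s := univ.filter (fun v => ¬ G.degree v = 1)) (p := fun v => G.degree v = 2)
    have t3 : (univ.filter (fun v => ¬ G.degree v = 1)).filter (fun v => G.degree v = 2)
        = univ.filter (fun v => G.degree v = 2) := by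
      rw [filter_filter]
      ext v
      simp only [mem_filter, mem_univ, true_and]
      constructor
      · rintro ⟨_, h⟩; exact h
      · intro h; exact ⟨by omega, h⟩
    have t4 : (univ.filter (fun v => ¬ G.degree v = 1)).filter (fun v => ¬ G.degree v = 2)
        = univ.filter (fun v => G.degree v = Δ) := by
      rw [filter_filter]
      ext v
      simp only [mem_filter, mem_univ, true_and]
      constructor
      · rintro ⟨h1, h2⟩
        rcases hdeg123 v with h | h | h
        · exact absurd h h1
        · exact absurd h h2
        · exact h
      · intro h; exact ⟨by omega, by omega⟩
    rw [t3, t4] at t2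
    rw [card_univ, hcard] at t1
    omega
  -- assemble
  rw [hk1] at hDcount h1count h2count hecount
  have hADn : (univ.filter (fun v => G.degree v = Δ)).card * Δ = n := by
    rw [hDcount]
    omega
  have hconc3 : (univ.filter (fun v => G.degree v = Δ)).card = n / Δ :=
    (Nat.div_eq_of_eq_mul_left (by omega) hADn.symm).symm
  have hconc4 : (univ.filter (fun v => G.degree v = 2)).card = n / Δ - 2 := by
    rw [← hconc3]
    omega
  have hconc5 : (univ.filter (fun v => G.degree v = 1)).card = (Δ - 2) * (n / Δ) + 2 := by
    rw [← hconc3, Nat.sub_mul]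
    have hc : Δ * (univ.filter (fun v => G.degree v = Δ)).card = n := by
      rw [mul_comm]; exact hADn
    rw [hc]
    have h4AD : 4 * (univ.filter (fun v => G.degree v = Δ)).card ≤ n := by
      calc 4 * (univ.filter (fun v => G.degree v = Δ)).card
          ≤ Δ * (univ.filter (fun v => G.degree v = Δ)).card :=
            Nat.mul_le_mul_right _ hΔ
        _ = n := hc
    omega
  have hconc6 : (G.edgeFinset.filter
      (fun e => ∃ u v, e = s(u, v) ∧ G.degree u = 1 ∧ G.degree v = Δ)).card
      = (univ.filter (fun v => G.degree v = 1)).card := by omega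
  have hconc7 : (G.edgeFinset.filter
      (fun e => ∃ u v, e = s(u, v) ∧ G.degree u = 2 ∧ G.degree v = Δ)).card
      = 2 * (univ.filter (fun v => G.degree v = 2)).card := by omega
  exact ⟨hk1, hconc2, hconc3, hconc4, hconc5, hconc6, hconc7⟩
end
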